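/- Define A(1) = l + m^6, A(2) = -l^2 + l^3 + 2*l^2*m^2 + l*m^4 + 2*l^2*m^4 - l*m^6 - l^2*m^8 + 2*l*m^10 + l^2*m^10 + 2*l*m^12 + m^14 - l*m^14, and A(p) = c*A(p-1) - d*A(p-2) for every integer p ≥ 3 (the Hoste–Shanahan recurrence for the A-polynomials of the twist knots K_p with positive p). Then for every integer p ≥ 1, (m^2 + l)^(2p-1) * m^(2p) * h(p) = A(p) in the field F = ℚ(l, m). -/
import Mathlib


noncomputable section
open MvPolynomial

/-- `F = ℚ(l, m)`, the field of rational functions in two variables over `ℚ`. -/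
abbrev Fq : Type := FractionRing (MvPolynomial (Fin 2) ℚ)

/-- The variable `l` of `ℚ(l, m)`. -/
def lF : Fq := algebraMap (MvPolynomial (Fin 2) ℚ) Fq (X 0)

/-- The variable `m` of `ℚ(l, m)`. -/
def mF : Fq := algebraMap (MvPolynomial (Fin 2) ℚ) Fq (X 1)

/-- `x0 = (l m² + 1)/(m² + l)`. -/
def x0 : Fq := (lF * mF ^ 2 + 1) / (mF ^ 2 + lF)

/-- `a0 = m⁴ - x0 m⁴ + x0² m² + m² + 1 - x0`. -/
def a0 : Fq := mF ^ 4 - x0 * mF ^ 4 + x0 ^ 2 * mF ^ 2 + mF ^ 2 + 1 - x0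

/-- `b0 = m⁴ - x0 m² + 1`. -/
def b0 : Fq := mF ^ 4 - x0 * mF ^ 2 + 1

/-- The coefficient `c` of the Hoste–Shanahan recurrence. -/
def cF : Fq := -lF + lF ^ 2 + 2 * lF * mF ^ 2 + mF ^ 4 + 2 * lF * mF ^ 4 +
  lF ^ 2 * mF ^ 4 + 2 * lF * mF ^ 6 + mF ^ 8 - lF * mF ^ 8

/-- The coefficient `d = m⁴ (l + m²)⁴` of the Hoste–Shanahan recurrence. -/
def dF : Fq := mF ^ 4 * (lF + mF ^ 2) ^ 4


lemma mF_ne : mF ≠ 0 := by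
  rw [mF, Ne, IsFractionRing.to_map_eq_zero_iff]
  exact X_ne_zero 1

lemma ml_ne : mF ^ 2 + lF ≠ 0 := by
  have he : mF ^ 2 + lF = algebraMap (MvPolynomial (Fin 2) ℚ) Fq ((X 1) ^ 2 + X 0) := by
    simp [mF, lF, map_add, map_pow]
  rw [he, Ne, IsFractionRing.to_map_eq_zero_iff]
  intro hzero
  have := congrArg (eval (fun i => if i = 0 then (1:ℚ) else 0)) hzero
  simp at this

set_option maxHeartbeats 1000000 in
/-- Theorem 2.2 for `p > 0`: `B_{K_p}(l, m) = A_{K_p}(l, m)`, where `A` is given by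
the Hoste–Shanahan recurrence with initial values `A_{K_1}` and `A_{K_2}`, and
`B_{K_p}(l, m) = (m² + l)^(2p-1) m^(2p) h(p)` (integer powers). -/
theorem stmt_13 (h : ℤ → Fq) (h0 : h 0 = 1) (h1 : h 1 = b0 / mF ^ 2)
    (hrec : ∀ p : ℤ, h p = (a0 / mF ^ 2) * h (p - 1) - h (p - 2))
    (A : ℤ → Fq)
    (hA1 : A 1 = lF + mF ^ 6)
    (hA2 : A 2 = -lF ^ 2 + lF ^ 3 + 2 * lF ^ 2 * mF ^ 2 + lF * mF ^ 4 +
      2 * lF ^ 2 * mF ^ 4 - lF * mF ^ 6 - lF ^ 2 * mF ^ 8 + 2 * lF * mF ^ 10 +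
      lF ^ 2 * mF ^ 10 + 2 * lF * mF ^ 12 + mF ^ 14 - lF * mF ^ 14)
    (hArec : ∀ p : ℤ, 3 ≤ p → A p = cF * A (p - 1) - dF * A (p - 2)) :
    ∀ p : ℤ, 1 ≤ p → (mF ^ 2 + lF) ^ (2 * p - 1) * mF ^ (2 * p) * h p = A p := by
  have hm := mF_ne
  have hml := ml_ne
  have hc : cF = (mF ^ 2 + lF) ^ 2 * a0 := by
    simp only [cF, a0, x0]
    field_simp
    ring
  have key : ∀ p : ℤ, 1 ≤ p →
      ((mF ^ 2 + lF) ^ (2 * p - 1) * mF ^ (2 * p) * h p = A p ∧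
       (mF ^ 2 + lF) ^ (2 * (p + 1) - 1) * mF ^ (2 * (p + 1)) * h (p + 1) = A (p + 1)) := by
    refine Int.le_induction ?_ ?_
    · constructor
      · rw [h1, hA1]
        norm_num [zpow_ofNat, b0, x0]
        field_simp
        ring
      · have h2 : h 2 = (a0 / mF ^ 2) * h 1 - h 0 := by
          have := hrec 2
          norm_num at this
          exact this
        have hb : (mF ^ 2 + lF) * b0 = lF + mF ^ 6 := by
          rw [b0, x0]
          field_simp
          ring
        rw [show (1:ℤ) + 1 = 2 by norm_num, h2, h0, h1, hA2]
        norm_num [zpow_ofNat]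
        have e : (mF ^ 2 + lF) ^ 3 * mF ^ 4 * (a0 / mF ^ 2 * (b0 / mF ^ 2) - 1)
            = ((mF ^ 2 + lF) ^ 2 * a0) * ((mF ^ 2 + lF) * b0) - (mF ^ 2 + lF) ^ 3 * mF ^ 4 := by
          field_simp
        rw [e, hb, ← hc, cF]
        ring
    · intro p hp ih
      refine ⟨ih.2, ?_⟩
      have hr := hrec (p + 2)
      have hAr := hArec (p + 2) (by linarith)
      rw [show (p:ℤ) + 2 - 1 = p + 1 by ring, show (p:ℤ) + 2 - 2 = p by ring] at hr hAr
      rw [show (p:ℤ) + 1 + 1 = p + 2 by ring, hr, hAr, ← ih.1, ← ih.2, hc,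
        show (2:ℤ) * (p + 2) - 1 = (2 * p - 1) + 4 by ring,
        show (2:ℤ) * (p + 2) = 2 * p + 4 by ring,
        show (2:ℤ) * (p + 1) - 1 = (2 * p - 1) + 2 by ring,
        show (2:ℤ) * (p + 1) = 2 * p + 2 by ring,
        zpow_add₀ hml, zpow_add₀ hm, zpow_add₀ hml, zpow_add₀ hm, dF]
      simp only [zpow_ofNat]
      field_simp
      ring
  exact fun p hp => (key p hp).1
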